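/- arXiv:2401.09026 — 2 statements merged into one kernel-verified Lean document; each statement's English description precedes it below -/
import Mathlib

section
/- Let C ⊆ ℝⁿ be a nonempty closed convex set whose recession cone rec C is polyhedral. Then C is approximately M-decomposable if and only if C is hyperbolic. -/
/-!
Write `K = rec C`. If `C ⊆ (C ∩ rB) + K + B`, then `M = (C ∩ rB) + B` witnesses hyperbolicity.

Conversely, let `C ⊆ M + K` with `M ⊆ ρB`. Then the support function `σ_C` is finite, indeed
at most `ρ‖d‖`, on the polar cone `K°`. By the Minkowski–Weyl theorem `K` is finitely generated,
so `K°` is cut out by finitely many half-spaces, and for `d₀ ∈ K°` and `s < 1` every `d ∈ K°`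
near `d₀` has `d - s d₀ ∈ K°`. Writing `d = (d - s d₀) + s d₀`, sublinearity of `σ_C`
makes it upper semicontinuous on `K°`. A compactness argument on `K° ∩ S` then shows that
`σ_{C ∩ rB}` is uniformly `ε`-close to `σ_C` there for large `r`. A point of `C` outside the
closed convex set `C_r + εB` would be separated from it by a unit vector `e ∈ K°`, and then
`σ_C(e) ≥ ⟪e, x⟫ > σ_{C_r + εB}(e) = σ_{C ∩ rB}(e) + ε` contradicts that closeness.
-/

open scoped InnerProductSpace Pointwise ENNReal
open Metric Filter

/-- The support function `σ_C(d) = sup_{x ∈ C} ⟪d, x⟫` of a set `C ⊆ ℝⁿ`,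
with values in the extended reals. -/
noncomputable def suppFun {n : ℕ} (C : Set (EuclideanSpace ℝ (Fin n)))
    (d : EuclideanSpace ℝ (Fin n)) : EReal :=
  ⨆ x ∈ C, ((⟪d, x⟫_ℝ : ℝ) : EReal)

/-- The effective domain `dom σ_C = {d : σ_C(d) < +∞}` of the support function. -/
def suppDom {n : ℕ} (C : Set (EuclideanSpace ℝ (Fin n))) :
    Set (EuclideanSpace ℝ (Fin n)) :=
  {d | suppFun C d < ⊤}

/-- The recession cone `rec C` of a set `C`. -/
def recCone {n : ℕ} (C : Set (EuclideanSpace ℝ (Fin n))) :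
    Set (EuclideanSpace ℝ (Fin n)) :=
  {y | ∀ x ∈ C, ∀ t : ℝ, 0 ≤ t → x + t • y ∈ C}

/-- The truncation `C_r = (C ∩ rB) + rec C` of `C` of radius `r`. -/
def trunc {n : ℕ} (C : Set (EuclideanSpace ℝ (Fin n))) (r : ℝ) :
    Set (EuclideanSpace ℝ (Fin n)) :=
  (C ∩ closedBall 0 r) + recCone C

/-- `C` is approximately M-decomposable: for every `ε > 0` there is `r > 0`
with `C ⊆ C_r + εB`. -/
def ApproxMDecomposable {n : ℕ} (C : Set (EuclideanSpace ℝ (Fin n))) : Prop :=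
  ∀ ε > (0 : ℝ), ∃ r > (0 : ℝ), C ⊆ trunc C r + closedBall 0 ε

/-- `C` is M-decomposable: `C = M + rec C` for some compact convex `M`. -/
def MDecomposable {n : ℕ} (C : Set (EuclideanSpace ℝ (Fin n))) : Prop :=
  ∃ M : Set (EuclideanSpace ℝ (Fin n)), IsCompact M ∧ Convex ℝ M ∧ C = M + recCone C

/-- `C` is hyperbolic: `C ⊆ M + rec C` for some compact convex `M`. -/
def Hyperbolic {n : ℕ} (C : Set (EuclideanSpace ℝ (Fin n))) : Prop :=
  ∃ M : Set (EuclideanSpace ℝ (Fin n)), IsCompact M ∧ Convex ℝ M ∧ C ⊆ M + recCone C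

/-- The polar cone `K° = {d : ⟪d, x⟫ ≤ 0 for all x ∈ K}` of a cone `K`. -/
def polarCone {n : ℕ} (K : Set (EuclideanSpace ℝ (Fin n))) :
    Set (EuclideanSpace ℝ (Fin n)) :=
  {d | ∀ x ∈ K, ⟪d, x⟫_ℝ ≤ 0}

/-- A cone is polyhedral if it is the intersection of finitely many closed
half-spaces whose boundary hyperplanes pass through the origin. -/
def IsPolyhedralCone {n : ℕ} (K : Set (EuclideanSpace ℝ (Fin n))) : Prop :=
  ∃ (m : ℕ) (a : Fin m → EuclideanSpace ℝ (Fin n)),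
    K = {x | ∀ i, ⟪a i, x⟫_ℝ ≤ 0}

open Topology PointedCone

section MinkowskiWeyl

variable {E : Type*} [NormedAddCommGroup E] [InnerProductSpace ℝ E]

lemma inner_nonpos_of_mem_hull {s : Set E} {a x : E} (hs : ∀ g ∈ s, ⟪a, g⟫_ℝ ≤ 0)
    (hx : x ∈ hull ℝ s) : ⟪a, x⟫_ℝ ≤ 0 := by
  induction hx using Submodule.span_induction with
  | mem g hg => exact hs g hg
  | zero => simp
  | add x y _ _ hx hy => rw [inner_add_right]; linarith
  | smul c x _ hx =>
    rw [← Nonneg.coe_smul, real_inner_smul_right]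
    exact mul_nonpos_of_nonneg_of_nonpos c.2 hx

lemma eq_zero_or_inner_pos_of_mem_hull {s : Set E} {a w : E} (hs : ∀ g ∈ s, 0 < ⟪a, g⟫_ℝ)
    (hw : w ∈ hull ℝ s) : w = 0 ∨ 0 < ⟪a, w⟫_ℝ := by
  induction hw using Submodule.span_induction with
  | mem g hg => exact .inr (hs g hg)
  | zero => exact .inl rfl
  | add x y _ _ hx hy =>
    rcases hx with rfl | hx
    · simpa using hy
    rcases hy with rfl | hy
    · simpa using Or.inr hx
    exact .inr (by rw [inner_add_right]; linarith)
  | smul c x _ hx =>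
    rw [← Nonneg.coe_smul, real_inner_smul_right, smul_eq_zero]
    rcases hx with rfl | hx
    · exact .inl (.inr rfl)
    rcases c.2.eq_or_lt with hc | hc
    · exact .inl (.inl hc.symm)
    · exact .inr (mul_pos hc hx)

lemma inner_smul_sub_inner_smul_mem_hull {s t G : Set E} {a : E}
    (hst : ∀ g ∈ s, ∀ h ∈ t, ⟪a, h⟫_ℝ • g - ⟪a, g⟫_ℝ • h ∈ hull ℝ G)
    {u w : E} (hu : u ∈ hull ℝ s) (hw : w ∈ hull ℝ t) :
    ⟪a, w⟫_ℝ • u - ⟪a, u⟫_ℝ • w ∈ hull ℝ G := by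
  induction hu using Submodule.span_induction with
  | mem g hg =>
    induction hw using Submodule.span_induction with
    | mem h hh => exact hst g hg h hh
    | zero => simp
    | add w w' _ _ hw hw' =>
      convert add_mem hw hw' using 1
      rw [inner_add_right]; module
    | smul c w _ hw =>
      convert smul_mem _ c.2 hw using 1
      rw [← Nonneg.coe_smul, real_inner_smul_right]; module
  | zero => simp
  | add u u' _ _ hu hu' =>
    convert add_mem hu hu' using 1
    rw [inner_add_right]; module
  | smul c u _ hu =>
    convert smul_mem _ c.2 hu using 1
    rw [← Nonneg.coe_smul, real_inner_smul_right]; module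

lemma add_mem_of_inner_smul_sub_inner_smul_mem {K : PointedCone ℝ E} {a u w : E} (hu : u ∈ K)
    (hpair : ⟪a, w⟫_ℝ • u - ⟪a, u⟫_ℝ • w ∈ K) (hw : w = 0 ∨ 0 < ⟪a, w⟫_ℝ)
    (huw : ⟪a, u + w⟫_ℝ ≤ 0) : u + w ∈ K := by
  rcases hw with rfl | haw
  · simpa using hu
  rw [inner_add_right] at huw
  have hβ : 0 < -⟪a, u⟫_ℝ := by linarith
  have hdecomp : u + w = (1 - ⟪a, w⟫_ℝ / -⟪a, u⟫_ℝ) • u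
      + (-⟪a, u⟫_ℝ)⁻¹ • (⟪a, w⟫_ℝ • u - ⟪a, u⟫_ℝ • w) := by
    have := (neg_pos.1 hβ).ne
    match_scalars <;> field_simp; ring
  rw [hdecomp]
  refine add_mem (K.smul_mem ?_ hu) (K.smul_mem (inv_nonneg.2 hβ.le) hpair)
  rw [sub_nonneg, div_le_one hβ]
  linarith

/-- Fourier–Motzkin elimination: the new generators are those `g ∈ G` with `⟪a, g⟫ ≤ 0`,
together with `⟪a, h⟫ • g - ⟪a, g⟫ • h` for all such `g` and all `h ∈ G` with `⟪a, h⟫ > 0`. -/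
lemma exists_finset_hull_eq_hull_inter_halfspace (G : Finset E) (a : E) :
    ∃ G' : Finset E,
      (hull ℝ (G' : Set E) : Set E) = (hull ℝ (G : Set E) : Set E) ∩ {x | ⟪a, x⟫_ℝ ≤ 0} := by
  classical
  obtain ⟨N, P, hGNP, hN, hP⟩ : ∃ N P : Finset E, G = N ∪ P ∧
      (∀ g ∈ (N : Set E), g ∈ G ∧ ⟪a, g⟫_ℝ ≤ 0) ∧ ∀ h ∈ (P : Set E), h ∈ G ∧ 0 < ⟪a, h⟫_ℝ :=
    ⟨_, _, (G.filter_union_filter_not_eq fun g => ⟪a, g⟫_ℝ ≤ 0).symm,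
      fun g hg => by simpa using hg, fun h hh => by simpa using hh⟩
  set G' := N ∪ (N ×ˢ P).image fun p => ⟪a, p.2⟫_ℝ • p.1 - ⟪a, p.1⟫_ℝ • p.2
  have hG' : ∀ v ∈ (G' : Set E), v ∈ hull ℝ (G : Set E) ∧ ⟪a, v⟫_ℝ ≤ 0 := by
    intro v hv
    simp only [G', Finset.coe_union, Finset.coe_image, Finset.coe_product, Set.mem_union,
      Set.mem_image, Set.mem_prod, Prod.exists] at hv
    rcases hv with hv | ⟨g, h, ⟨hg, hh⟩, rfl⟩
    · exact ⟨subset_hull (hN v hv).1, (hN v hv).2⟩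
    obtain ⟨hgG, hag⟩ := hN g hg
    obtain ⟨hhG, hah⟩ := hP h hh
    refine ⟨?_, ?_⟩
    · rw [sub_eq_add_neg, ← neg_smul]
      exact add_mem (smul_mem _ hah.le (subset_hull hgG))
        (smul_mem _ (neg_nonneg.2 hag) (subset_hull hhG))
    · rw [inner_sub_right, real_inner_smul_right, real_inner_smul_right, mul_comm, sub_self]
  refine ⟨G', Set.Subset.antisymm ?_ ?_⟩
  · exact fun x hx => ⟨Submodule.span_le.2 (fun v hv => (hG' v hv).1) hx,
      inner_nonpos_of_mem_hull (fun v hv => (hG' v hv).2) hx⟩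
  rintro x ⟨hx, hax : ⟪a, x⟫_ℝ ≤ 0⟩
  rw [hGNP, Finset.coe_union, SetLike.mem_coe, hull, Submodule.span_union,
    Submodule.mem_sup] at hx
  obtain ⟨u, hu, w, hw, rfl⟩ := hx
  refine add_mem_of_inner_smul_sub_inner_smul_mem
    (Submodule.span_mono (Finset.coe_subset.2 Finset.subset_union_left) hu) ?_
    (eq_zero_or_inner_pos_of_mem_hull (fun h hh => (hP h hh).2) hw) hax
  refine inner_smul_sub_inner_smul_mem_hull (G := (G' : Set E)) (fun g hg h hh => ?_) hu hw
  exact subset_hull (Finset.mem_coe.2 (Finset.mem_union_right _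
    (Finset.mem_image.2 ⟨(g, h), Finset.mem_product.2 ⟨hg, hh⟩, rfl⟩)))

lemma exists_finset_hull_eq_top [FiniteDimensional ℝ E] :
    ∃ G : Finset E, hull ℝ (G : Set E) = ⊤ := by
  classical
  let b := Module.finBasis ℝ E
  refine ⟨Finset.univ.image b ∪ Finset.univ.image (-⇑b), eq_top_iff.2 fun x _ => ?_⟩
  rw [← b.sum_repr x]
  refine Submodule.sum_mem _ fun i _ => ?_
  rcases le_total 0 (b.repr x i) with h | h
  · exact smul_mem _ h (subset_hull (by simp))
  · rw [← neg_smul_neg]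
    exact smul_mem _ (neg_nonneg.2 h) (subset_hull (by simp))

/-- The Minkowski–Weyl theorem, in the direction H-cone ⇒ V-cone. -/
theorem exists_finset_hull_eq_setOf_inner_nonpos [FiniteDimensional ℝ E] {ι : Type*}
    (a : ι → E) (s : Finset ι) :
    ∃ G : Finset E, (hull ℝ (G : Set E) : Set E) = {x | ∀ i ∈ s, ⟪a i, x⟫_ℝ ≤ 0} := by
  classical
  induction s using Finset.induction_on with
  | empty =>
    obtain ⟨G, hG⟩ := exists_finset_hull_eq_top (E := E)
    exact ⟨G, by simp [hG]⟩
  | insert i s _ ih =>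
    obtain ⟨G, hG⟩ := ih
    obtain ⟨G', hG'⟩ := exists_finset_hull_eq_hull_inter_halfspace G (a i)
    refine ⟨G', ?_⟩
    rw [hG', hG]
    ext x
    simp [and_comm]

end MinkowskiWeyl

section SupportFunction

variable {E : Type*} [NormedAddCommGroup E] [InnerProductSpace ℝ E] {C : Set E} {G : Finset E}
  {ρ : ℝ} {d₀ : E}

lemma eventually_forall_inner_sub_smul_nonpos (hd₀ : ∀ g ∈ G, ⟪d₀, g⟫_ℝ ≤ 0) {s : ℝ}
    (hs : s < 1) :
    ∀ᶠ d in 𝓝[{d | ∀ g ∈ G, ⟪d, g⟫_ℝ ≤ 0}] d₀, ∀ g ∈ G, ⟪d - s • d₀, g⟫_ℝ ≤ 0 := by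
  have key : ∀ g ∈ G, ∀ᶠ d in 𝓝 d₀, ⟪d, g⟫_ℝ ≤ 0 → ⟪d - s • d₀, g⟫_ℝ ≤ 0 := by
    intro g hg
    rcases (hd₀ g hg).eq_or_lt with h0 | hneg
    · refine .of_forall fun d hd => ?_
      rwa [inner_sub_left, real_inner_smul_left, h0, mul_zero, sub_zero]
    have hval : ⟪d₀ - s • d₀, g⟫_ℝ < 0 := by
      rw [inner_sub_left, real_inner_smul_left]
      nlinarith
    have hcont : Continuous fun d => ⟪d - s • d₀, g⟫_ℝ := by fun_prop
    exact (hcont.continuousAt.eventually_lt continuousAt_const hval).mono fun d hd _ => hd.le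
  filter_upwards [nhdsWithin_le_nhds ((eventually_all_finset G).2 key), self_mem_nhdsWithin]
    with d hd hdP g hg using hd g hg (hdP g hg)

/-- Upper semicontinuity of the support function of `C` on the polyhedral cone. -/
lemma eventually_forall_inner_le_of_forall_inner_le
    (hσ : ∀ d, (∀ g ∈ G, ⟪d, g⟫_ℝ ≤ 0) → ∀ x ∈ C, ⟪d, x⟫_ℝ ≤ ρ * ‖d‖)
    (hd₀ : ∀ g ∈ G, ⟪d₀, g⟫_ℝ ≤ 0) {b b' : ℝ} (hb : ∀ x ∈ C, ⟪d₀, x⟫_ℝ ≤ b) (hbb' : b < b') :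
    ∀ᶠ d in 𝓝[{d | ∀ g ∈ G, ⟪d, g⟫_ℝ ≤ 0}] d₀, ∀ x ∈ C, ⟪d, x⟫_ℝ ≤ b' := by
  have hs : ∀ᶠ s in 𝓝[<] (1 : ℝ), 0 ≤ s ∧ ρ * ‖d₀ - s • d₀‖ + s * b < b' := by
    refine .and (nhdsWithin_le_nhds ((lt_mem_nhds one_pos).mono fun s hs => hs.le)) ?_
    have hcont : Continuous fun s : ℝ => ρ * ‖d₀ - s • d₀‖ + s * b := by fun_prop
    refine nhdsWithin_le_nhds (hcont.continuousAt.eventually_lt continuousAt_const ?_)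
    simpa using hbb'
  obtain ⟨s, ⟨hs0, hsb⟩, hs1 : s < 1⟩ := (hs.and self_mem_nhdsWithin).exists
  have hnear : ∀ᶠ d in 𝓝 d₀, ρ * ‖d - s • d₀‖ + s * b < b' := by
    have hcont : Continuous fun d : E => ρ * ‖d - s • d₀‖ + s * b := by fun_prop
    exact hcont.continuousAt.eventually_lt continuousAt_const hsb
  filter_upwards [eventually_forall_inner_sub_smul_nonpos hd₀ hs1, nhdsWithin_le_nhds hnear]
    with d hw hd x hx
  calc ⟪d, x⟫_ℝ = ⟪d - s • d₀, x⟫_ℝ + s * ⟪d₀, x⟫_ℝ := by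
        rw [inner_sub_left, real_inner_smul_left]; ring
    _ ≤ ρ * ‖d - s • d₀‖ + s * b :=
        add_le_add (hσ _ hw x hx) (mul_le_mul_of_nonneg_left (hb x hx) hs0)
    _ ≤ b' := hd.le

lemma exists_eventually_inner_lt_inner_add (hC : C.Nonempty)
    (hσ : ∀ d, (∀ g ∈ G, ⟪d, g⟫_ℝ ≤ 0) → ∀ x ∈ C, ⟪d, x⟫_ℝ ≤ ρ * ‖d‖)
    (hd₀ : ∀ g ∈ G, ⟪d₀, g⟫_ℝ ≤ 0) {ε : ℝ} (hε : 0 < ε) :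
    ∃ y ∈ C, ∀ᶠ d in 𝓝[{d | ∀ g ∈ G, ⟪d, g⟫_ℝ ≤ 0}] d₀,
      ∀ x ∈ C, ⟪d, x⟫_ℝ < ⟪d, y⟫_ℝ + ε := by
  have hbdd : BddAbove ((⟪d₀, ·⟫_ℝ) '' C) :=
    ⟨ρ * ‖d₀‖, by rintro _ ⟨x, hx, rfl⟩; exact hσ d₀ hd₀ x hx⟩
  obtain ⟨_, ⟨y, hy, rfl⟩, hlt⟩ := exists_lt_of_lt_csSup (hC.image _)
    (sub_lt_self (sSup ((⟪d₀, ·⟫_ℝ) '' C)) (by positivity : 0 < ε / 3))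
  have hb : ∀ x ∈ C, ⟪d₀, x⟫_ℝ ≤ ⟪d₀, y⟫_ℝ + ε / 3 := fun x hx => by
    linarith [le_csSup hbdd ⟨x, hx, rfl⟩]
  have hy_near : ∀ᶠ d in 𝓝 d₀, ⟪d₀, y⟫_ℝ - ε / 3 < ⟪d, y⟫_ℝ := by
    have hcont : Continuous fun d : E => ⟪d, y⟫_ℝ := by fun_prop
    exact continuousAt_const.eventually_lt hcont.continuousAt (by linarith)
  refine ⟨y, hy, ?_⟩
  filter_upwards [eventually_forall_inner_le_of_forall_inner_le hσ hd₀ hb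
    (by linarith : ⟪d₀, y⟫_ℝ + ε / 3 < ⟪d₀, y⟫_ℝ + 2 * ε / 3), nhdsWithin_le_nhds hy_near]
    with d hd hdy x hx
  linarith [hd x hx]

/-- For large `r`, the support function of `C ∩ rB` is uniformly `ε`-close on `Q` to that
of `C`. -/
lemma exists_forall_exists_norm_le_inner_lt_inner_add (hC : C.Nonempty)
    (hσ : ∀ d, (∀ g ∈ G, ⟪d, g⟫_ℝ ≤ 0) → ∀ x ∈ C, ⟪d, x⟫_ℝ ≤ ρ * ‖d‖)
    {Q : Set E} (hQ : IsCompact Q) (hQG : Q ⊆ {d | ∀ g ∈ G, ⟪d, g⟫_ℝ ≤ 0}) {ε : ℝ}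
    (hε : 0 < ε) :
    ∃ r, ∀ d ∈ Q, ∃ y ∈ C, ‖y‖ ≤ r ∧ ∀ x ∈ C, ⟪d, x⟫_ℝ < ⟪d, y⟫_ℝ + ε := by
  refine hQ.induction_on (p := fun S => ∃ r, ∀ d ∈ S, ∃ y ∈ C, ‖y‖ ≤ r ∧
      ∀ x ∈ C, ⟪d, x⟫_ℝ < ⟪d, y⟫_ℝ + ε) ⟨0, by simp⟩
    (fun S T hST ⟨r, hr⟩ => ⟨r, fun d hd => hr d (hST hd)⟩) ?_ fun d₀ hd₀ => ?_
  · rintro S T ⟨r, hr⟩ ⟨r', hr'⟩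
    refine ⟨max r r', ?_⟩
    rintro d (hd | hd)
    · obtain ⟨y, hy, hyr, h⟩ := hr d hd
      exact ⟨y, hy, hyr.trans (le_max_left _ _), h⟩
    · obtain ⟨y, hy, hyr, h⟩ := hr' d hd
      exact ⟨y, hy, hyr.trans (le_max_right _ _), h⟩
  · obtain ⟨y, hy, hev⟩ := exists_eventually_inner_lt_inner_add hC hσ (hQG hd₀) hε
    exact ⟨_, nhdsWithin_mono _ hQG hev, ‖y‖, fun d hd => ⟨y, hy, le_rfl, hd⟩⟩

end SupportFunction

section Euclidean

variable {n : ℕ} {C : Set (EuclideanSpace ℝ (Fin n))}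

lemma zero_mem_recCone (C : Set (EuclideanSpace ℝ (Fin n))) : 0 ∈ recCone C :=
  fun x hx t _ => by simpa using hx

lemma add_mem_recCone {y z : EuclideanSpace ℝ (Fin n)} (hy : y ∈ recCone C)
    (hz : z ∈ recCone C) : y + z ∈ recCone C :=
  fun x hx t ht => by rw [smul_add, ← add_assoc]; exact hz _ (hy x hx t ht) t ht

lemma smul_mem_recCone {y : EuclideanSpace ℝ (Fin n)} (hy : y ∈ recCone C) {c : ℝ}
    (hc : 0 ≤ c) : c • y ∈ recCone C :=
  fun x hx t ht => by rw [smul_smul]; exact hy x hx _ (mul_nonneg ht hc)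

lemma isClosed_recCone (hC : IsClosed C) : IsClosed (recCone C) := by
  have : recCone C = ⋂ x ∈ C, ⋂ t ∈ Set.Ici (0 : ℝ), (fun y => x + t • y) ⁻¹' C := by
    ext y; simp [recCone]
  rw [this]
  exact isClosed_biInter fun x _ => isClosed_biInter fun t _ => hC.preimage (by fun_prop)

lemma convex_recCone (hC : Convex ℝ C) : Convex ℝ (recCone C) := by
  intro y hy z hz α β hα hβ hαβ x hx t ht
  convert hC (hy x hx t ht) (hz x hx t ht) hα hβ hαβ using 1
  obtain rfl : β = 1 - α := by linarith
  module

lemma isClosed_polarCone (K : Set (EuclideanSpace ℝ (Fin n))) : IsClosed (polarCone K) := by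
  have : polarCone K = ⋂ k ∈ K, {d | ⟪d, k⟫_ℝ ≤ 0} := by ext d; simp [polarCone]
  rw [this]
  exact isClosed_biInter fun k _ => isClosed_le (by fun_prop) continuous_const

lemma polarCone_hull (G : Finset (EuclideanSpace ℝ (Fin n))) :
    polarCone (SetLike.coe (hull ℝ (G : Set _))) = {d | ∀ g ∈ G, ⟪d, g⟫_ℝ ≤ 0} :=
  Set.ext fun _ => ⟨fun hd g hg => hd g (subset_hull hg),
    fun hd _ hx => inner_nonpos_of_mem_hull hd hx⟩

lemma IsPolyhedralCone.exists_finset_eq_hull {K : Set (EuclideanSpace ℝ (Fin n))}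
    (hK : IsPolyhedralCone K) :
    ∃ G : Finset (EuclideanSpace ℝ (Fin n)), K = SetLike.coe (hull ℝ (G : Set _)) := by
  obtain ⟨m, a, rfl⟩ := hK
  obtain ⟨G, hG⟩ := exists_finset_hull_eq_setOf_inner_nonpos a Finset.univ
  exact ⟨G, by simpa using hG.symm⟩

lemma inner_le_mul_norm_of_subset_add {M K : Set (EuclideanSpace ℝ (Fin n))} {ρ : ℝ}
    (hC : C ⊆ M + K) (hM : M ⊆ closedBall 0 ρ) {d x : EuclideanSpace ℝ (Fin n)}
    (hd : d ∈ polarCone K) (hx : x ∈ C) : ⟪d, x⟫_ℝ ≤ ρ * ‖d‖ := by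
  obtain ⟨m, hm, k, hk, rfl⟩ := hC hx
  have hm' := mem_closedBall_zero_iff.1 (hM hm)
  calc ⟪d, m + k⟫_ℝ ≤ ‖d‖ * ‖m‖ + 0 := by
        rw [inner_add_right]; exact add_le_add (real_inner_le_norm d m) (hd k hk)
    _ ≤ ρ * ‖d‖ := by nlinarith [norm_nonneg d]

lemma exists_norm_eq_one_mem_polarCone_inner_lt {D K : Set (EuclideanSpace ℝ (Fin n))}
    (hD : IsClosed D) (hDc : Convex ℝ D) (hne : D.Nonempty) (hK : K ⊆ recCone D)
    {x : EuclideanSpace ℝ (Fin n)} (hx : x ∉ D) :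
    ∃ e ∈ polarCone K, ‖e‖ = 1 ∧ ∀ z ∈ D, ⟪e, z⟫_ℝ < ⟪e, x⟫_ℝ := by
  obtain ⟨f, u, hfD, hfx⟩ := geometric_hahn_banach_closed_point hDc hD hx
  set d := (InnerProductSpace.toDual ℝ (EuclideanSpace ℝ (Fin n))).symm f
  have hdf : ∀ z, ⟪d, z⟫_ℝ = f z := fun z => InnerProductSpace.toDual_symm_apply
  obtain ⟨z₀, hz₀⟩ := hne
  have hdK : d ∈ polarCone K := by
    intro k hk
    by_contra! hpos
    rw [hdf] at hpos
    have := hfD _ (hK hk z₀ hz₀ ((u - f z₀) / f k)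
      (div_nonneg (by linarith [hfD z₀ hz₀]) hpos.le))
    rw [map_add, map_smul, smul_eq_mul, div_mul_cancel₀ _ hpos.ne'] at this
    linarith
  have hd : 0 < ‖d‖ := norm_pos_iff.2 fun h => by
    have h₀ := hdf z₀
    have h₁ := hdf x
    rw [h, inner_zero_left] at h₀ h₁
    linarith [hfD z₀ hz₀]
  refine ⟨‖d‖⁻¹ • d, fun k hk => ?_, ?_, fun z hz => ?_⟩
  · rw [real_inner_smul_left]
    exact mul_nonpos_of_nonneg_of_nonpos (by positivity) (hdK k hk)
  · rw [norm_smul, norm_inv, norm_norm, inv_mul_cancel₀ hd.ne']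
  · rw [real_inner_smul_left, real_inner_smul_left, hdf, hdf]
    exact mul_lt_mul_of_pos_left (by linarith [hfD z hz]) (by positivity)

lemma isClosed_trunc_add_closedBall (hC : IsClosed C) (r ε : ℝ) :
    IsClosed (trunc C r + closedBall 0 ε) := by
  rw [trunc, add_right_comm]
  exact (isClosed_recCone hC).add_left_of_isCompact
    (((isCompact_closedBall 0 r).inter_left hC).add (isCompact_closedBall 0 ε))

lemma convex_trunc_add_closedBall (hC : Convex ℝ C) (r ε : ℝ) :
    Convex ℝ (trunc C r + closedBall 0 ε) :=
  ((hC.inter (convex_closedBall _ _)).add (convex_recCone hC)).add (convex_closedBall _ _)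

lemma recCone_subset_recCone_trunc_add_closedBall (C : Set (EuclideanSpace ℝ (Fin n)))
    (r ε : ℝ) : recCone C ⊆ recCone (trunc C r + closedBall 0 ε) := by
  rintro k hk _ ⟨_, ⟨c, hc, k', hk', rfl⟩, b, hb, rfl⟩ t ht
  rw [add_right_comm, add_assoc c]
  exact Set.add_mem_add (Set.add_mem_add hc (add_mem_recCone hk' (smul_mem_recCone hk ht))) hb

lemma add_mem_trunc_add_closedBall {r ε : ℝ} {y b : EuclideanSpace ℝ (Fin n)} (hy : y ∈ C)
    (hyr : ‖y‖ ≤ r) (hb : ‖b‖ ≤ ε) : y + b ∈ trunc C r + closedBall 0 ε := by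
  have hy' : y ∈ C ∩ closedBall 0 r := ⟨hy, mem_closedBall_zero_iff.2 hyr⟩
  simpa [trunc] using Set.add_mem_add (Set.add_mem_add hy' (zero_mem_recCone C))
    (mem_closedBall_zero_iff.2 hb)

lemma ApproxMDecomposable.hyperbolic (h : ApproxMDecomposable C) (hcl : IsClosed C)
    (hconv : Convex ℝ C) : Hyperbolic C := by
  obtain ⟨r, -, hr⟩ := h 1 one_pos
  refine ⟨C ∩ closedBall 0 r + closedBall 0 1,
    ((isCompact_closedBall 0 r).inter_left hcl).add (isCompact_closedBall 0 1),
    (hconv.inter (convex_closedBall _ _)).add (convex_closedBall _ _), ?_⟩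
  rwa [trunc, add_right_comm] at hr

lemma Hyperbolic.approxMDecomposable {G : Finset (EuclideanSpace ℝ (Fin n))}
    (h : Hyperbolic C) (hne : C.Nonempty) (hcl : IsClosed C) (hconv : Convex ℝ C)
    (hG : recCone C = SetLike.coe (hull ℝ (G : Set _))) : ApproxMDecomposable C := by
  obtain ⟨M, hMc, -, hCM⟩ := h
  obtain ⟨ρ, hM⟩ := hMc.isBounded.subset_closedBall 0
  have hP : polarCone (recCone C) = {d | ∀ g ∈ G, ⟪d, g⟫_ℝ ≤ 0} := hG ▸ polarCone_hull G
  have hσ : ∀ d, (∀ g ∈ G, ⟪d, g⟫_ℝ ≤ 0) → ∀ x ∈ C, ⟪d, x⟫_ℝ ≤ ρ * ‖d‖ := fun d hd x hx =>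
    inner_le_mul_norm_of_subset_add hCM hM (hP ▸ hd) hx
  intro ε hε
  obtain ⟨r, hr⟩ := exists_forall_exists_norm_le_inner_lt_inner_add hne hσ
    ((isCompact_sphere 0 1).inter_left (isClosed_polarCone _))
    (Set.inter_subset_left.trans hP.subset) hε
  obtain ⟨c₀, hc₀⟩ := hne
  set R := max r ‖c₀‖ + 1
  refine ⟨R, by positivity, fun x hx => by_contra fun hxD => ?_⟩
  obtain ⟨e, heP, he1, hsep⟩ := exists_norm_eq_one_mem_polarCone_inner_lt
    (isClosed_trunc_add_closedBall hcl R ε) (convex_trunc_add_closedBall hconv R ε)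
    ⟨_, add_mem_trunc_add_closedBall hc₀ (by linarith [le_max_right r ‖c₀‖])
      (norm_zero.trans_le hε.le)⟩
    (recCone_subset_recCone_trunc_add_closedBall C R ε) hxD
  obtain ⟨y, hy, hyr, hyx⟩ := hr e ⟨heP, mem_sphere_zero_iff_norm.2 he1⟩
  have := hsep _ (add_mem_trunc_add_closedBall hy (by linarith [le_max_left r ‖c₀‖])
    (by simp [norm_smul, he1, abs_of_pos hε] : ‖ε • e‖ ≤ ε))
  rw [inner_add_right, real_inner_smul_right, real_inner_self_eq_norm_sq, he1] at this
  linarith [hyx x hx]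

end Euclidean

/-- if the recession cone of `C` is polyhedral, then `C` is
approximately M-decomposable if and only if it is hyperbolic. -/
theorem approxMDecomposable_iff_hyperbolic_of_polyhedral_recCone {n : ℕ}
    (C : Set (EuclideanSpace ℝ (Fin n)))
    (hne : C.Nonempty) (hcl : IsClosed C) (hconv : Convex ℝ C)
    (hpoly : IsPolyhedralCone (recCone C)) :
    ApproxMDecomposable C ↔ Hyperbolic C := by
  obtain ⟨G, hG⟩ := hpoly.exists_finset_eq_hull
  exact ⟨fun h => h.hyperbolic hcl hconv, fun h => h.approxMDecomposable hne hcl hconv hG⟩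
end

section
/- Let C = (C² × {0}) + cl cone(C² × {1}) ⊆ ℝ³ with C² = {x ∈ ℝ² : x₂ ≥ x₁²}. Then the support function σ_C is not continuous relative to its domain dom σ_C = (rec C)°: for d = (0,0,−1)ᵀ and dₙ = (1/n, −1/(4n²), −1)ᵀ one has dₙ ∈ (rec C)° for all n ∈ ℕ, dₙ → d, σ_C(dₙ) ≥ 3/4 for all n, but σ_C(d) ≤ 0. -/
open scoped InnerProductSpace Pointwise ENNReal
open Metric Filter

/-- The cone generated by a set: `cone A = {λa : λ ≥ 0, a ∈ A}`. -/
def coneOf {n : ℕ} (A : Set (EuclideanSpace ℝ (Fin n))) :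
    Set (EuclideanSpace ℝ (Fin n)) :=
  {y | ∃ t : ℝ, 0 ≤ t ∧ ∃ a ∈ A, y = t • a}

/-- `C² × {0} ⊆ ℝ³`, where `C² = {x ∈ ℝ² : x₂ ≥ x₁²}`. -/
def parabolaBase : Set (EuclideanSpace ℝ (Fin 3)) :=
  {x | (x 0) ^ 2 ≤ x 1 ∧ x 2 = 0}

/-- `C² × {1} ⊆ ℝ³`, where `C² = {x ∈ ℝ² : x₂ ≥ x₁²}`. -/
def parabolaLift : Set (EuclideanSpace ℝ (Fin 3)) :=
  {x | (x 0) ^ 2 ≤ x 1 ∧ x 2 = 1}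

/-- The set `C = (C² × {0}) + cl cone(C² × {1}) ⊆ ℝ³`. -/
def exampleSet : Set (EuclideanSpace ℝ (Fin 3)) :=
  parabolaBase + closure (coneOf parabolaLift)

/-- The point `d = (0, 0, −1)ᵀ ∈ ℝ³`. -/
noncomputable def dpt : EuclideanSpace ℝ (Fin 3) :=
  (WithLp.equiv 2 (Fin 3 → ℝ)).symm ![0, 0, -1]

/-- The sequence `dₙ = (1/n, −1/(4n²), −1)ᵀ ∈ ℝ³`. -/
noncomputable def dseq (k : ℕ) : EuclideanSpace ℝ (Fin 3) :=
  (WithLp.equiv 2 (Fin 3 → ℝ)).symm ![1 / (k : ℝ), -1 / (4 * (k : ℝ) ^ 2), -1]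

/-!
`cl cone (C² × {1})` is the rotated second-order cone `K = {x₀² ≤ x₁ x₂, x₁, x₂ ≥ 0}`, so
`C = (C² × {0}) + K` and `K ⊆ rec C`. Testing `d ∈ K°` against `(a, a², 1) ∈ K` gives
`σ_C(d) ≤ -d₂`, hence `dom σ_C = (rec C)°`. The `dₙ` lie on the boundary of `K°` and take the
value `3/4` at `(n, n², 0) ∈ C`, whereas `d = (0, 0, -1)` is nonpositive on `C` because every
point of `C` has nonnegative last coordinate.
-/

section General

variable {n : ℕ} {C : Set (EuclideanSpace ℝ (Fin n))} {d x : EuclideanSpace ℝ (Fin n)}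

lemma inner_le_suppFun (hx : x ∈ C) : ((⟪d, x⟫_ℝ : ℝ) : EReal) ≤ suppFun C d :=
  le_iSup₂ (f := fun x (_ : x ∈ C) => ((⟪d, x⟫_ℝ : ℝ) : EReal)) x hx

/-- Along a recession direction `y` with `⟪d, y⟫ > 0` the values `⟪d, x + t • y⟫` are
unbounded. -/
lemma suppDom_subset_polarCone_recCone (hC : C.Nonempty) :
    suppDom C ⊆ polarCone (recCone C) := by
  intro d hd y hy
  obtain ⟨x, hx⟩ := hC
  obtain ⟨M, hM, -⟩ := EReal.exists_between_coe_real hd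
  by_contra! hdy
  set t := |M - ⟪d, x⟫_ℝ| / ⟪d, y⟫_ℝ
  have hle : ((⟪d, x + t • y⟫_ℝ : ℝ) : EReal) < M :=
    (inner_le_suppFun (hy x hx t (by positivity))).trans_lt hM
  rw [EReal.coe_lt_coe_iff, inner_add_right, real_inner_smul_right,
    div_mul_cancel₀ _ hdy.ne'] at hle
  linarith [le_abs_self (M - ⟪d, x⟫_ℝ)]

end General

lemma not_continuousOn_of_tendsto {ι X Y : Type*} [TopologicalSpace X] [TopologicalSpace Y]
    [Preorder Y] [ClosedIciTopology Y] {l : Filter ι} [l.NeBot] {f : X → Y} {s : Set X}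
    {u : ι → X} {x : X} {a : Y} (hx : x ∈ s) (hu : Tendsto u l (nhds x))
    (hus : ∀ᶠ i in l, u i ∈ s) (ha : ∀ᶠ i in l, a ≤ f (u i)) (hfx : ¬ a ≤ f x) :
    ¬ ContinuousOn f s := fun hf =>
  hfx <| ge_of_tendsto ((hf x hx).tendsto.comp (tendsto_nhdsWithin_iff.2 ⟨hu, hus⟩)) ha

lemma inner_fin_three (d x : EuclideanSpace ℝ (Fin 3)) :
    ⟪d, x⟫_ℝ = d 0 * x 0 + d 1 * x 1 + d 2 * x 2 := by
  simp [PiLp.inner_apply, Fin.sum_univ_three]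
  ring

def rotatedCone : Set (EuclideanSpace ℝ (Fin 3)) :=
  {w | w 0 ^ 2 ≤ w 1 * w 2 ∧ 0 ≤ w 1 ∧ 0 ≤ w 2}

namespace rotatedCone

lemma isClosed : IsClosed rotatedCone := by
  simp only [rotatedCone, Set.ofPred_and]
  exact (isClosed_le (by fun_prop) (by fun_prop)).inter
    ((isClosed_le (by fun_prop) (by fun_prop)).inter (isClosed_le (by fun_prop) (by fun_prop)))

lemma mem_of_coords {a b c : ℝ} (h : a ^ 2 ≤ b * c) (hb : 0 ≤ b) (hc : 0 ≤ c) :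
    !₂[a, b, c] ∈ rotatedCone :=
  ⟨by simpa using h, by simpa using hb, by simpa using hc⟩

lemma add_mem {w y : EuclideanSpace ℝ (Fin 3)} (hw : w ∈ rotatedCone) (hy : y ∈ rotatedCone) :
    w + y ∈ rotatedCone := by
  obtain ⟨hw0, hw1, hw2⟩ := hw
  obtain ⟨hy0, hy1, hy2⟩ := hy
  refine ⟨?_, ?_, ?_⟩ <;> simp only [PiLp.add_apply]
  -- `(2 w₀ y₀)² ≤ 4 (w₁ y₂)(w₂ y₁) ≤ (w₁ y₂ + w₂ y₁)²`
  · nlinarith [sq_nonneg (w 1 * y 2 - w 2 * y 1),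
      sq_nonneg (w 1 * y 2 + w 2 * y 1 - 2 * w 0 * y 0),
      mul_nonneg hw1 hy2, mul_nonneg hw2 hy1, sq_nonneg (w 0 * y 0)]
  · positivity
  · positivity

lemma smul_mem {y : EuclideanSpace ℝ (Fin 3)} {t : ℝ} (ht : 0 ≤ t) (hy : y ∈ rotatedCone) :
    t • y ∈ rotatedCone := by
  obtain ⟨hy0, hy1, hy2⟩ := hy
  refine ⟨?_, ?_, ?_⟩ <;> simp only [PiLp.smul_apply, smul_eq_mul]
  · nlinarith [sq_nonneg t]
  · positivity
  · positivity

lemma zero_mem : (0 : EuclideanSpace ℝ (Fin 3)) ∈ rotatedCone :=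
  ⟨by simp, by simp, by simp⟩

lemma mem_polarCone {d : EuclideanSpace ℝ (Fin 3)} (hd : d 0 ^ 2 ≤ 4 * d 1 * d 2)
    (hd1 : d 1 ≤ 0) (hd2 : d 2 ≤ 0) : d ∈ polarCone rotatedCone := by
  rintro w ⟨hw0, hw1, hw2⟩
  rw [inner_fin_three]
  -- `(d₀ w₀)² ≤ 4 d₁ d₂ w₁ w₂ ≤ (d₁ w₁ + d₂ w₂)²`
  have hsq : (d 0 * w 0) ^ 2 ≤ (-d 1 * w 1 + -d 2 * w 2) ^ 2 := by
    nlinarith [sq_nonneg (d 1 * w 1 - d 2 * w 2), mul_le_mul_of_nonneg_left hw0 (sq_nonneg (d 0)),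
      mul_le_mul_of_nonneg_right hd (mul_nonneg hw1 hw2)]
  linarith [(abs_le_of_sq_le_sq' hsq (by nlinarith)).2]

end rotatedCone

lemma mem_coneOf_parabolaLift {w : EuclideanSpace ℝ (Fin 3)} (hw : w ∈ rotatedCone)
    (hw2 : 0 < w 2) : w ∈ coneOf parabolaLift := by
  refine ⟨w 2, hw2.le, !₂[w 0 / w 2, w 1 / w 2, 1], ⟨?_, by simp⟩, ?_⟩
  · simp only [Matrix.cons_val]
    rw [div_pow, div_le_div_iff₀ (by positivity) hw2]
    nlinarith [hw.1]
  · ext i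
    fin_cases i <;> simp [field]

lemma coneOf_parabolaLift_subset : coneOf parabolaLift ⊆ rotatedCone := by
  rintro _ ⟨t, ht, a, ⟨ha, ha2⟩, rfl⟩
  exact rotatedCone.smul_mem ht ⟨by rw [ha2, mul_one]; exact ha, by nlinarith [sq_nonneg (a 0)],
    by rw [ha2]; exact zero_le_one⟩

/-- Pushing a point of the cone slightly in direction `(0, 0, 1)` makes its last coordinate
positive, and such points lie in the cone itself. -/
lemma closure_coneOf_parabolaLift : closure (coneOf parabolaLift) = rotatedCone := by
  refine (closure_minimal coneOf_parabolaLift_subset rotatedCone.isClosed).antisymm fun w hw => ?_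
  set e : EuclideanSpace ℝ (Fin 3) := !₂[0, 0, 1]
  have he : e ∈ rotatedCone := rotatedCone.mem_of_coords (by norm_num) le_rfl zero_le_one
  have hlim : Tendsto (fun k : ℕ => w + (1 / ((k : ℝ) + 1)) • e) atTop (nhds w) := by
    simpa using tendsto_const_nhds.add
      ((tendsto_one_div_add_atTop_nhds_zero_nat (𝕜 := ℝ)).smul_const e)
  refine mem_closure_of_tendsto hlim (Eventually.of_forall fun k => ?_)
  refine mem_coneOf_parabolaLift
    (rotatedCone.add_mem hw (rotatedCone.smul_mem (by positivity) he)) ?_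
  have : 0 ≤ w 2 := hw.2.2
  simp [e]
  positivity

lemma exampleSet_eq : exampleSet = parabolaBase + rotatedCone := by
  rw [exampleSet, closure_coneOf_parabolaLift]

lemma zero_mem_exampleSet : (0 : EuclideanSpace ℝ (Fin 3)) ∈ exampleSet := by
  rw [exampleSet_eq]
  exact ⟨0, ⟨by simp, by simp⟩, 0, rotatedCone.zero_mem, add_zero 0⟩

lemma rotatedCone_subset_recCone : rotatedCone ⊆ recCone exampleSet := by
  rw [exampleSet_eq]
  rintro y hy _ ⟨p, hp, q, hq, rfl⟩ t ht
  exact ⟨p, hp, q + t • y, rotatedCone.add_mem hq (rotatedCone.smul_mem ht hy),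
    (add_assoc p q _).symm⟩

/-- For `p = (a, b, 0)` with `a² ≤ b`, test `d` against `(a, a², 1)` and `(0, 1, 0)` in the cone. -/
lemma suppFun_exampleSet_le {d : EuclideanSpace ℝ (Fin 3)} (hd : d ∈ polarCone rotatedCone) :
    suppFun exampleSet d ≤ ((-d 2 : ℝ) : EReal) := by
  rw [exampleSet_eq]
  refine iSup₂_le ?_
  rintro _ ⟨p, ⟨hp, hp2⟩, q, hq, rfl⟩
  have hd1 := hd _
    (rotatedCone.mem_of_coords (a := 0) (b := 1) (c := 0) (by norm_num) zero_le_one le_rfl)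
  have hdp := hd _ (rotatedCone.mem_of_coords (a := p 0) (b := p 0 ^ 2) (c := 1) (by simp)
    (sq_nonneg _) zero_le_one)
  simp only [inner_fin_three, Matrix.cons_val] at hd1 hdp
  rw [EReal.coe_le_coe_iff, inner_add_right, inner_fin_three d p, hp2]
  nlinarith [hd q hq, mul_le_mul_of_nonpos_left hp (show d 1 ≤ 0 by linarith)]

lemma suppDom_exampleSet : suppDom exampleSet = polarCone (recCone exampleSet) := by
  refine (suppDom_subset_polarCone_recCone ⟨0, zero_mem_exampleSet⟩).antisymm fun d hd => ?_
  have hd' : d ∈ polarCone rotatedCone := fun w hw => hd w (rotatedCone_subset_recCone hw)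
  exact (suppFun_exampleSet_le hd').trans_lt (EReal.coe_lt_top _)

/-- `dₙ` lies on the boundary of the polar cone: `dₙ₀² = 1/n² = 4 dₙ₁ dₙ₂`. -/
lemma dseq_mem_suppDom {k : ℕ} (hk : 1 ≤ k) : dseq k ∈ suppDom exampleSet := by
  have hk : (0 : ℝ) < k := by exact_mod_cast hk
  have hd : dseq k ∈ polarCone rotatedCone := by
    refine rotatedCone.mem_polarCone ?_ ?_ ?_ <;> simp [dseq]
    · exact le_of_eq (by field_simp)
    · exact div_nonpos_of_nonpos_of_nonneg (by norm_num) (by positivity)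
  exact (suppFun_exampleSet_le hd).trans_lt (EReal.coe_lt_top _)

lemma suppFun_dpt_nonpos : suppFun exampleSet dpt ≤ 0 := by
  rw [exampleSet_eq]
  refine iSup₂_le ?_
  rintro _ ⟨p, ⟨-, hp2⟩, q, ⟨-, -, hq2⟩, rfl⟩
  rw [← EReal.coe_zero, EReal.coe_le_coe_iff, inner_fin_three]
  simp [dpt, hp2, hq2]

lemma three_quarters_le_suppFun_dseq {k : ℕ} (hk : 1 ≤ k) :
    ((3 : ℝ) / 4 : EReal) ≤ suppFun exampleSet (dseq k) := by
  have hk : (k : ℝ) ≠ 0 := by positivity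
  have hx : !₂[(k : ℝ), (k : ℝ) ^ 2, 0] ∈ exampleSet := by
    rw [exampleSet_eq]
    exact ⟨_, ⟨by simp, by simp⟩, 0, rotatedCone.zero_mem, add_zero _⟩
  have hval : ⟪dseq k, !₂[(k : ℝ), (k : ℝ) ^ 2, 0]⟫_ℝ = 3 / 4 := by
    simp [inner_fin_three, dseq, field]
    ring
  have h := inner_le_suppFun (d := dseq k) hx
  rw [hval] at h
  exact_mod_cast h

lemma tendsto_dseq : Tendsto dseq atTop (nhds dpt) := by
  have h0 : Tendsto (fun k : ℕ => (k : ℝ)⁻¹) atTop (nhds 0) :=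
    tendsto_inv_atTop_nhds_zero_nat
  have h1 : Tendsto (fun k : ℕ => -1 / (4 * (k : ℝ) ^ 2)) atTop (nhds 0) := by
    convert (h0.pow 2).const_mul (-1 / 4 : ℝ) using 2 <;> ring
  refine ((PiLp.continuous_toLp 2 _).tendsto _).comp (tendsto_pi_nhds.2 fun i => ?_)
  fin_cases i <;> simp [h0, h1]

/-- for `C = (C² × {0}) + cl cone(C² × {1})`, the support
function `σ_C` is not continuous relative to its domain
`dom σ_C = (rec C)°`: one has `dₙ ∈ (rec C)°` for all `n ≥ 1`, `dₙ → d`,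
`σ_C(dₙ) ≥ 3/4` for all `n ≥ 1`, but `σ_C(d) ≤ 0`, where `d = (0,0,−1)ᵀ`. -/
theorem exampleSet_suppFun_not_continuousOn :
    suppDom exampleSet = polarCone (recCone exampleSet) ∧
    ¬ ContinuousOn (suppFun exampleSet) (suppDom exampleSet) ∧
    (∀ k : ℕ, 1 ≤ k → dseq k ∈ polarCone (recCone exampleSet)) ∧
    Tendsto dseq atTop (nhds dpt) ∧
    (∀ k : ℕ, 1 ≤ k → ((3 : ℝ) / 4 : EReal) ≤ suppFun exampleSet (dseq k)) ∧
    suppFun exampleSet dpt ≤ 0 := by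
  have hdpt : dpt ∈ suppDom exampleSet := suppFun_dpt_nonpos.trans_lt EReal.zero_lt_top
  have hlarge : ¬ ((3 : ℝ) / 4 : EReal) ≤ suppFun exampleSet dpt := fun h => by
    have h34 := h.trans suppFun_dpt_nonpos
    rw [show ((3 : ℝ) / 4 : EReal) = ((3 / 4 : ℝ) : EReal) by norm_cast] at h34
    norm_num at h34
  refine ⟨suppDom_exampleSet, ?_, fun k hk => suppDom_exampleSet ▸ dseq_mem_suppDom hk,
    tendsto_dseq, fun k hk => three_quarters_le_suppFun_dseq hk, suppFun_dpt_nonpos⟩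
  exact not_continuousOn_of_tendsto hdpt tendsto_dseq
    (eventually_atTop.2 ⟨1, fun k hk => dseq_mem_suppDom hk⟩)
    (eventually_atTop.2 ⟨1, fun k hk => three_quarters_le_suppFun_dseq hk⟩) hlarge
end
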